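/- arXiv:2505.10447 — 5 statements merged into one kernel-verified Lean document; each statement's English description precedes it below -/
import Mathlib

section
/- (Cyclic associative zesting condition.) Let N ≥ 1 be a natural number, Γ₀ a (multiplicatively written) abelian group, A a (multiplicatively written) abelian group, and B : Γ₀ × Γ₀ → A a bimultiplicative pairing, i.e. B(ab,c) = B(a,c)·B(b,c) and B(a,bc) = B(a,b)·B(a,c) for all a,b,c ∈ Γ₀. Fix ν ∈ Γ₀, set m := B(ν,ν), and let q ∈ A satisfy q^N = m. Then for all i, j, k, l ∈ ZMod N one has B(λ^{(ν)}(i,j), λ^{(ν)}(k,l)) = ω^{(q)}(j,k,l) · ω^{(q)}(i, j+k, l) · ω^{(q)}(i,j,k) · ω^{(q)}(i+j, k, l)^{-1} · ω^{(q)}(i, j, k+l)^{-1}; that is, the pairing of the 2-cocycle λ^{(ν)} with itself equals the group-cohomological coboundary of the 3-cochain ω^{(q)}. (This is the compatibility condition making (γ, λ^{(ν)}, ω^{(q)}) an associative ZMod N-zesting datum.) -/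
/-- The standard cyclic 2-cochain `λ^{(ν)}` on `ZMod N`:
`λ^{(ν)}(i,j) = 1` if `ī + j̄ < N` and `ν` otherwise. -/
def zestLambda (N : ℕ) {M : Type*} [One M] (ν : M) (i j : ZMod N) : M :=
  if i.val + j.val < N then 1 else ν

/-- The standard cyclic 3-cochain `ω^{(ν)}` on `ZMod N`:
`ω^{(ν)}(i,j,k) = 1` if `ī + j̄ < N` and `ν^{k̄}` otherwise. -/
def zestOmega (N : ℕ) {M : Type*} [Monoid M] (ν : M) (i j k : ZMod N) : M :=
  if i.val + j.val < N then 1 else ν ^ k.val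

lemma zmod_val_add_cases {N : ℕ} [NeZero N] (i j : ZMod N) :
    (i + j).val = i.val + j.val ∨ (i + j).val + N = i.val + j.val := by
  have hi := ZMod.val_lt i
  have hj := ZMod.val_lt j
  rcases lt_or_ge (i.val + j.val) N with h | h
  · left; rw [ZMod.val_add, Nat.mod_eq_of_lt h]
  · right; rw [ZMod.val_add, Nat.mod_eq_sub_mod h, Nat.mod_eq_of_lt (by omega)]; omega

/-- Cyclic associative zesting condition.  Let `B : Γ₀ × Γ₀ → A` be a bimultiplicative
pairing of abelian groups, `ν ∈ Γ₀`, `m := B(ν,ν)` and `q ∈ A` with `q^N = m`.  Then the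
pairing of the 2-cocycle `λ^{(ν)}` with itself equals the coboundary of the 3-cochain
`ω^{(q)}`. -/
theorem cyclic_associative_zesting_condition (N : ℕ) (hN : 1 ≤ N)
    {Γ₀ : Type*} [CommGroup Γ₀] {A : Type*} [CommGroup A]
    (B : Γ₀ → Γ₀ → A)
    (hB₁ : ∀ a b c : Γ₀, B (a * b) c = B a c * B b c)
    (hB₂ : ∀ a b c : Γ₀, B a (b * c) = B a b * B a c)
    (ν : Γ₀) (m : A) (hm : m = B ν ν) (q : A) (hq : q ^ N = m) :
    ∀ i j k l : ZMod N,
      B (zestLambda N ν i j) (zestLambda N ν k l)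
        = zestOmega N q j k l * zestOmega N q i (j + k) l * zestOmega N q i j k
            * (zestOmega N q (i + j) k l)⁻¹ * (zestOmega N q i j (k + l))⁻¹ := by
  intro i j k l
  haveI : NeZero N := ⟨by omega⟩
  have hBl : ∀ x : Γ₀, B 1 x = 1 := by
    intro x
    have h := hB₁ 1 1 x
    rw [one_mul] at h
    exact (left_eq_mul.mp h).symm ▸ rfl
  have hBr : ∀ x : Γ₀, B x 1 = 1 := by
    intro x
    have h := hB₂ x 1 1
    rw [one_mul] at h
    exact (left_eq_mul.mp h).symm ▸ rfl
  rw [hm] at hq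
  have hiN := ZMod.val_lt i
  have hjN := ZMod.val_lt j
  have hkN := ZMod.val_lt k
  have hlN := ZMod.val_lt l
  have hijN := ZMod.val_lt (i + j)
  have hjkN := ZMod.val_lt (j + k)
  have hklN := ZMod.val_lt (k + l)
  have hij := zmod_val_add_cases i j
  have hjk := zmod_val_add_cases j k
  have hkl := zmod_val_add_cases k l
  unfold zestLambda zestOmega
  split_ifs <;>
    (try simp only [hBl, hBr, one_mul, mul_one, inv_one]) <;>
    first
      | rfl
      | omega
      | ((first | (conv_lhs => rw [← hq]) | (conv_lhs => rw [show (1:A) = q ^ (0:ℕ) by simp]))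
         simp only [← zpow_natCast, ← zpow_neg, ← zpow_add]
         congr 1
         push_cast
         omega)
end

section
/- Let 𝕜 be a field, let H and K be Hopf algebras over 𝕜, and let π : H → K be a bialgebra homomorphism which is cocentral, i.e. (id_H ⊗ π)∘Δ_H = (id_H ⊗ π)∘Δ_H^{op}, where Δ_H^{op} is the comultiplication of H composed with the flip of tensor factors. Suppose g ∈ H is a group-like element (Δ_H(g) = g ⊗ g and ε(g) = 1), x ∈ H is a (1,g)-skew-primitive element (Δ_H(x) = x ⊗ 1 + g ⊗ x), and the family {1, g, x} is linearly independent over 𝕜. Then π(g) = 1 and π(x) = 0. -/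
open TensorProduct Coalgebra

lemma aux_tmul_indep {𝕜 : Type*} [Field 𝕜] {H K : Type*} [AddCommGroup H] [Module 𝕜 H]
    [AddCommGroup K] [Module 𝕜 K] {n : ℕ} {v : Fin n → H} (hv : LinearIndependent 𝕜 v)
    (k : Fin n → K) (h : ∑ i, v i ⊗ₜ[𝕜] k i = (0 : H ⊗[𝕜] K)) : ∀ i, k i = 0 := by
  obtain ⟨f, hf⟩ := (Finsupp.linearCombination 𝕜 v).exists_leftInverse_of_injective
    (LinearMap.ker_eq_bot.2 hv)
  intro i
  have := congrArg ((TensorProduct.lid 𝕜 K).toLinearMap ∘ₗ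
    LinearMap.rTensor K ((Finsupp.lapply i : (Fin n →₀ 𝕜) →ₗ[𝕜] 𝕜) ∘ₗ f)) h
  simp only [map_sum, LinearMap.coe_comp, Function.comp_apply, LinearMap.rTensor_tmul,
    map_zero] at this
  have key : ∀ j, ((Finsupp.lapply i : (Fin n →₀ 𝕜) →ₗ[𝕜] 𝕜) (f (v j)) : 𝕜) = if j = i then 1 else 0 := by
    intro j
    have hfv : f (v j) = Finsupp.single j 1 := by
      have := LinearMap.congr_fun hf (Finsupp.single j 1)
      simpa [Finsupp.linearCombination_single] using this
    simp [hfv, Finsupp.single_apply]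
  simp only [key] at this
  simpa [TensorProduct.lid_tmul, ite_smul, Finset.sum_ite_eq'] using this

/-- If `π : H → K` is a cocentral bialgebra homomorphism of Hopf algebras over a field `𝕜`,
`g ∈ H` is group-like, `x ∈ H` is `(1,g)`-skew-primitive, and `{1, g, x}` is linearly
independent, then `π(g) = 1` and `π(x) = 0`. -/
theorem cocentral_kills_skew_primitives
    {𝕜 : Type*} [Field 𝕜] {H K : Type*} [Ring H] [Ring K]
    [HopfAlgebra 𝕜 H] [HopfAlgebra 𝕜 K]
    (π : H →ₐc[𝕜] K)
    (hcocentral :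
      (TensorProduct.map (LinearMap.id : H →ₗ[𝕜] H) π.toLinearMap) ∘ₗ
          (Coalgebra.comul (R := 𝕜) (A := H))
        = (TensorProduct.map (LinearMap.id : H →ₗ[𝕜] H) π.toLinearMap) ∘ₗ
            (TensorProduct.comm 𝕜 H H).toLinearMap ∘ₗ (Coalgebra.comul (R := 𝕜) (A := H)))
    (g x : H)
    (hg : Coalgebra.comul (R := 𝕜) g = g ⊗ₜ[𝕜] g)
    (hgε : Coalgebra.counit (R := 𝕜) g = (1 : 𝕜))
    (hx : Coalgebra.comul (R := 𝕜) x = x ⊗ₜ[𝕜] (1 : H) + g ⊗ₜ[𝕜] x)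
    (hind : LinearIndependent 𝕜 ![(1 : H), g, x]) :
    π g = 1 ∧ π x = 0 := by
  have hcoe : ∀ y : H, π.toLinearMap y = π y := fun y => rfl
  have heq := LinearMap.congr_fun hcocentral x
  simp only [LinearMap.coe_comp, Function.comp_apply, LinearEquiv.coe_coe, hx, map_add,
    TensorProduct.map_tmul, TensorProduct.comm_tmul, LinearMap.id_coe, id_eq,
    hcoe, map_one] at heq
  -- heq : x ⊗ₜ 1 + g ⊗ₜ π x = 1 ⊗ₜ π x + x ⊗ₜ π g
  have h0 : ∑ i, (![(1 : H), g, x] i) ⊗ₜ[𝕜] (![π x, -π x, π g - 1] i) = (0 : H ⊗[𝕜] K) := by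
    simp only [Fin.sum_univ_three, Matrix.cons_val_zero, Matrix.cons_val_one, Matrix.head_cons,
      Matrix.cons_val_two, Matrix.tail_cons]
    have h2 : (1 : H) ⊗ₜ[𝕜] π x + g ⊗ₜ[𝕜] (-π x) + x ⊗ₜ[𝕜] (π g - 1)
        = ((1 : H) ⊗ₜ[𝕜] π x + x ⊗ₜ[𝕜] π g) - (x ⊗ₜ[𝕜] (1 : K) + g ⊗ₜ[𝕜] π x) := by
      rw [tmul_neg, tmul_sub]; abel
    rw [h2, ← heq, sub_self]
  have := aux_tmul_indep hind _ h0
  have h1 := this 0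
  have h2 := this 2
  simp only [Matrix.cons_val_zero, Matrix.cons_val_two, Matrix.tail_cons, Matrix.head_cons,
    sub_eq_zero] at h1 h2
  exact ⟨h2, h1⟩
end

section
/- Let 𝕜 be a field, H and K Hopf algebras over 𝕜, and S the antipode of K. Let r : H ⊗ K → 𝕜 be a linear map satisfying, in Sweedler notation, (R1) r(hh', k) = Σ r(h', k₍₁₎)·r(h, k₍₂₎), (R2) r(h, kk') = Σ r(h₍₁₎, k)·r(h₍₂₎, k'), and (R3) r(h, 1) = ε(h), r(1, k) = ε(k), for all h, h' ∈ H and k, k' ∈ K. Then for all h ∈ H and k ∈ K, Σ r(h₍₁₎, k₍₁₎)·r(h₍₂₎, S(k₍₂₎)) = ε(h)·ε(k) and Σ r(h₍₁₎, S(k₍₁₎))·r(h₍₂₎, k₍₂₎) = ε(h)·ε(k); that is, r is convolution invertible in (H ⊗ K)* with convolution inverse r∘(id_H ⊗ S). -/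
open TensorProduct

set_option maxHeartbeats 1000000
set_option synthInstance.maxHeartbeats 400000

/-- Let `H, K` be Hopf algebras over a field `𝕜`, `S` the antipode of `K`, and
`r : H ⊗ K → 𝕜` a linear map satisfying the relative r-form axioms
(R1) `r(hh', k) = Σ r(h', k₍₁₎)·r(h, k₍₂₎)`,
(R2) `r(h, kk') = Σ r(h₍₁₎, k)·r(h₍₂₎, k')`,
(R3) `r(h, 1) = ε(h)` and `r(1, k) = ε(k)`.
Then `Σ r(h₍₁₎, k₍₁₎)·r(h₍₂₎, S(k₍₂₎)) = ε(h)ε(k)` and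
`Σ r(h₍₁₎, S(k₍₁₎))·r(h₍₂₎, k₍₂₎) = ε(h)ε(k)`; i.e. `r` is convolution invertible with
convolution inverse `r ∘ (id ⊗ S)`. -/
theorem relative_rform_convolution_invertible
    {𝕜 : Type*} [Field 𝕜] {H K : Type*} [Ring H] [Ring K]
    [HopfAlgebra 𝕜 H] [HopfAlgebra 𝕜 K]
    (r : H ⊗[𝕜] K →ₗ[𝕜] 𝕜)
    -- (R1): r(hh', k) = Σ r(h', k₍₁₎)·r(h, k₍₂₎)
    (hR1 : ∀ (h h' : H) (k : K),
      r ((h * h') ⊗ₜ[𝕜] k)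
        = LinearMap.mul' 𝕜 𝕜 (TensorProduct.map
            (r ∘ₗ TensorProduct.mk 𝕜 H K h') (r ∘ₗ TensorProduct.mk 𝕜 H K h)
            (Coalgebra.comul (R := 𝕜) k)))
    -- (R2): r(h, kk') = Σ r(h₍₁₎, k)·r(h₍₂₎, k')
    (hR2 : ∀ (h : H) (k k' : K),
      r (h ⊗ₜ[𝕜] (k * k'))
        = LinearMap.mul' 𝕜 𝕜 (TensorProduct.map
            (r ∘ₗ (TensorProduct.mk 𝕜 H K).flip k) (r ∘ₗ (TensorProduct.mk 𝕜 H K).flip k')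
            (Coalgebra.comul (R := 𝕜) h)))
    -- (R3): r(h,1) = ε(h), r(1,k) = ε(k)
    (hR3l : ∀ h : H, r (h ⊗ₜ[𝕜] (1 : K)) = Coalgebra.counit (R := 𝕜) h)
    (hR3r : ∀ k : K, r ((1 : H) ⊗ₜ[𝕜] k) = Coalgebra.counit (R := 𝕜) k) :
    (∀ (h : H) (k : K),
      LinearMap.mul' 𝕜 𝕜 (TensorProduct.map r r
        (TensorProduct.tensorTensorTensorComm 𝕜 H H K K
          ((Coalgebra.comul (R := 𝕜) h) ⊗ₜ[𝕜]
            (TensorProduct.map (LinearMap.id : K →ₗ[𝕜] K)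
              (HopfAlgebra.antipode (R := 𝕜) (A := K)) (Coalgebra.comul (R := 𝕜) k)))))
        = Coalgebra.counit (R := 𝕜) h * Coalgebra.counit (R := 𝕜) k) ∧
    (∀ (h : H) (k : K),
      LinearMap.mul' 𝕜 𝕜 (TensorProduct.map r r
        (TensorProduct.tensorTensorTensorComm 𝕜 H H K K
          ((Coalgebra.comul (R := 𝕜) h) ⊗ₜ[𝕜]
            (TensorProduct.map (HopfAlgebra.antipode (R := 𝕜) (A := K))
              (LinearMap.id : K →ₗ[𝕜] K) (Coalgebra.comul (R := 𝕜) k)))))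
        = Coalgebra.counit (R := 𝕜) h * Coalgebra.counit (R := 𝕜) k) := by
  have aux : ∀ (x : H ⊗[𝕜] H) (a b : K),
      LinearMap.mul' 𝕜 𝕜 (TensorProduct.map r r
        (TensorProduct.tensorTensorTensorComm 𝕜 H H K K (x ⊗ₜ[𝕜] (a ⊗ₜ[𝕜] b))))
      = LinearMap.mul' 𝕜 𝕜 (TensorProduct.map
          (r ∘ₗ (TensorProduct.mk 𝕜 H K).flip a) (r ∘ₗ (TensorProduct.mk 𝕜 H K).flip b) x) := by
    intro x a b
    induction x using TensorProduct.induction_on with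
    | zero =>
        simp only [TensorProduct.zero_tmul, LinearEquiv.map_zero, map_zero]
    | tmul h₁ h₂ => simp [TensorProduct.tensorTensorTensorComm_tmul, mul_comm]
    | add x y hx hy =>
        simp only [TensorProduct.add_tmul, LinearEquiv.map_add, map_add, hx, hy]
  have key : ∀ (h : H) (y : K ⊗[𝕜] K),
      LinearMap.mul' 𝕜 𝕜 (TensorProduct.map r r
        (TensorProduct.tensorTensorTensorComm 𝕜 H H K K
          ((Coalgebra.comul (R := 𝕜) h) ⊗ₜ[𝕜] y)))
      = r (h ⊗ₜ[𝕜] (LinearMap.mul' 𝕜 K y)) := by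
    intro h y
    induction y using TensorProduct.induction_on with
    | zero =>
        simp only [TensorProduct.tmul_zero, LinearEquiv.map_zero, map_zero]
    | tmul a b => rw [aux, LinearMap.mul'_apply, hR2]
    | add x y hx hy =>
        rw [TensorProduct.tmul_add, map_add, map_add, map_add, hx, hy, ← map_add,
          ← TensorProduct.tmul_add, map_add (LinearMap.mul' 𝕜 K) x y]
  have final : ∀ (h : H) (k : K) (c : 𝕜),
      r (h ⊗ₜ[𝕜] (algebraMap 𝕜 K c)) = Coalgebra.counit (R := 𝕜) h * c := by
    intro h k c
    rw [Algebra.algebraMap_eq_smul_one, TensorProduct.tmul_smul, map_smul, hR3l, smul_eq_mul,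
      mul_comm]
  constructor
  · intro h k
    have h1 : TensorProduct.map (LinearMap.id : K →ₗ[𝕜] K)
        (HopfAlgebra.antipode (R := 𝕜) (A := K)) (Coalgebra.comul (R := 𝕜) k)
        = (HopfAlgebra.antipode (R := 𝕜) (A := K)).lTensor K (Coalgebra.comul (R := 𝕜) k) := rfl
    rw [h1, key, HopfAlgebra.mul_antipode_lTensor_comul_apply, final h k]
  · intro h k
    have h1 : TensorProduct.map (HopfAlgebra.antipode (R := 𝕜) (A := K))
        (LinearMap.id : K →ₗ[𝕜] K) (Coalgebra.comul (R := 𝕜) k)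
        = (HopfAlgebra.antipode (R := 𝕜) (A := K)).rTensor K (Coalgebra.comul (R := 𝕜) k) := rfl
    rw [h1, key, HopfAlgebra.mul_antipode_rTensor_comul_apply, final h k]
end

section
/- Let 𝕜 be a field, H and K Hopf algebras over 𝕜, S the antipode of K, and r : H ⊗ K → 𝕜 a linear map satisfying conditions (R1), (R2), (R3). Define linear maps c : H ⊗ K → K ⊗ H by c(h ⊗ k) = Σ r(h₍₁₎, k₍₁₎) · k₍₂₎ ⊗ h₍₂₎ and c̄ : K ⊗ H → H ⊗ K by c̄(k ⊗ h) = Σ r(h₍₁₎, S(k₍₁₎)) · h₍₂₎ ⊗ k₍₂₎. Then c̄ ∘ c = id_{H⊗K} and c ∘ c̄ = id_{K⊗H}; in particular c is a linear isomorphism with inverse c̄. -/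
/-!
Write `φ(k ⊗ h) = r(h, k)` and `ψ(k ⊗ h) = r(h, S k)` for functionals on the tensor coalgebra
`K ⊗ H`. Then `c` is the flip followed by the right hit action `x ↦ Σ φ(x₍₁₎) x₍₂₎` of `φ`, and
`c̄` is the right hit action of `ψ` followed by the flip. Coassociativity makes the right hit
action an anti-homomorphism from the convolution algebra `(K ⊗ H)*` to `End (K ⊗ H)`, so it is
enough that `φ` and `ψ` are convolution inverses. By (R2) and (R3), `k ↦ r(-, k)` is a unital
multiplicative map from `K` to the convolution algebra `H*`; hence `(φ * ψ)(k ⊗ h)` collapses to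
`r(h, k₍₁₎ S(k₍₂₎)) = ε(k) ε(h)`, and likewise `ψ * φ` through `S(k₍₁₎) k₍₂₎ = ε(k)`.
-/

open TensorProduct Coalgebra WithConv

namespace Coalgebra

variable {R C : Type*} [CommSemiring R] [AddCommMonoid C] [Module R C]

/-- The right hit action `c ↼ f = Σ f(c₍₁₎) c₍₂₎` of `C*` on `C`. -/
noncomputable def rightHit [CoalgebraStruct R C] (f : WithConv (C →ₗ[R] R)) : C →ₗ[R] C :=
  lift (LinearMap.lsmul R C ∘ₗ f.ofConv) ∘ₗ comul

lemma Repr.rightHit_apply [CoalgebraStruct R C] {ι : Type*} {c : C} (𝓡 : Repr R c ι)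
    (f : WithConv (C →ₗ[R] R)) :
    rightHit f c = ∑ i ∈ 𝓡.index, f (𝓡.left i) • 𝓡.right i := by
  simp [rightHit, ← 𝓡.eq]

variable [Coalgebra R C]

lemma rightHit_one : rightHit (1 : WithConv (C →ₗ[R] R)) = LinearMap.id := by
  simpa [rightHit, LinearMap.convOne_def] using lift_lsmul_comp_counit_comp_comul

lemma rightHit_mul (f g : WithConv (C →ₗ[R] R)) :
    rightHit (f * g) = rightHit g ∘ₗ rightHit f := by
  ext c
  have coassoc :=
    sum_tmul_tmul_eq (ℛ R c) (fun i ↦ ℛ R ((ℛ R c).left i)) (fun i ↦ ℛ R ((ℛ R c).right i))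
  have hit := congr(lift (LinearMap.lsmul R C ∘ₗ f.ofConv)
    (map LinearMap.id (lift (LinearMap.lsmul R C ∘ₗ g.ofConv)) $coassoc))
  simp only [map_sum, map_tmul, lift.tmul, LinearMap.coe_comp, Function.comp_apply,
    LinearMap.lsmul_apply, LinearMap.id_coe, id_eq, map_smul, smul_smul] at hit
  rw [LinearMap.comp_apply, (ℛ R c).rightHit_apply, (ℛ R c).rightHit_apply, map_sum]
  simp only [LinearMap.map_smul]
  simp only [(ℛ R _).rightHit_apply, (ℛ R _).convMul_apply, Finset.sum_smul, Finset.smul_sum,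
    smul_smul]
  simpa only [mul_comm] using hit

lemma rightHit_comp_rightHit_of_mul_eq_one {f g : WithConv (C →ₗ[R] R)} (hfg : f * g = 1) :
    rightHit g ∘ₗ rightHit f = LinearMap.id := by
  rw [← rightHit_mul, hfg, rightHit_one]

end Coalgebra

section Pairing

variable {R H K : Type*} [CommSemiring R] [AddCommMonoid H] [Module R H]

lemma Coalgebra.Repr.convMul_lift_tmul [CoalgebraStruct R H] [AddCommMonoid K] [Module R K]
    [CoalgebraStruct R K] {ι : Type*} {k : K} (𝓡 : Repr R k ι) (F G : K →ₗ[R] H →ₗ[R] R)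
    (h : H) :
    (toConv (lift F) * toConv (lift G)) (k ⊗ₜ h)
      = ∑ i ∈ 𝓡.index, (toConv (F (𝓡.left i)) * toConv (G (𝓡.right i))) h := by
  simp [comul_tmul, ← 𝓡.eq, ← (ℛ R h).eq, sum_tmul, tmul_sum, map_sum]
  exact Finset.sum_comm

lemma lift_comp_convMul_lift_comp_eq_one [Coalgebra R H] [Semiring K] [Bialgebra R K]
    {F : K →ₗ[R] H →ₗ[R] R} (hmul : ∀ k k', toConv (F (k * k')) = toConv (F k) * toConv (F k'))
    (hone : toConv (F 1) = 1) {P Q : K →ₗ[R] K} (hPQ : toConv P * toConv Q = 1) :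
    toConv (lift (F ∘ₗ P)) * toConv (lift (F ∘ₗ Q)) = 1 := by
  refine WithConv.ext (TensorProduct.ext' fun k h ↦ ?_)
  have hk := congr(F ($hPQ k) h)
  rw [(ℛ R k).convMul_apply] at hk
  simp only [map_sum, LinearMap.sum_apply, LinearMap.convOne_apply] at hk
  have h1 : F 1 h = counit h := by simpa using congr(ofConv $hone h)
  rw [(ℛ R k).convMul_lift_tmul]
  simp only [LinearMap.comp_apply, ← hmul]
  simp [hk, Algebra.algebraMap_eq_smul_one, h1, counit_tmul, mul_comm]

end Pairing

theorem relative_rform_half_braiding_invertible_general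
    {𝕜 : Type*} [Field 𝕜] {H K : Type*} [Ring H] [Ring K]
    [HopfAlgebra 𝕜 H] [HopfAlgebra 𝕜 K]
    (r : H ⊗[𝕜] K →ₗ[𝕜] 𝕜)
    -- (R2): r(h, kk') = Σ r(h₍₁₎, k)·r(h₍₂₎, k')
    (hR2 : ∀ (h : H) (k k' : K),
      r (h ⊗ₜ[𝕜] (k * k'))
        = LinearMap.mul' 𝕜 𝕜 (TensorProduct.map
            (r ∘ₗ (TensorProduct.mk 𝕜 H K).flip k) (r ∘ₗ (TensorProduct.mk 𝕜 H K).flip k')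
            (Coalgebra.comul (R := 𝕜) h)))
    -- (R3): r(h,1) = ε(h), r(1,k) = ε(k)
    (hR3l : ∀ h : H, r (h ⊗ₜ[𝕜] (1 : K)) = Coalgebra.counit (R := 𝕜) h)
    -- the half-braiding c(h ⊗ k) = Σ r(h₍₁₎, k₍₁₎) · k₍₂₎ ⊗ h₍₂₎
    (c : H ⊗[𝕜] K →ₗ[𝕜] K ⊗[𝕜] H)
    (hc : ∀ (h : H) (k : K),
      c (h ⊗ₜ[𝕜] k)
        = (TensorProduct.lid 𝕜 (K ⊗[𝕜] H))
            (TensorProduct.map r (TensorProduct.comm 𝕜 H K).toLinearMap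
              (TensorProduct.tensorTensorTensorComm 𝕜 H H K K
                ((Coalgebra.comul (R := 𝕜) h) ⊗ₜ[𝕜] (Coalgebra.comul (R := 𝕜) k)))))
    -- the claimed inverse c̄(k ⊗ h) = Σ r(h₍₁₎, S(k₍₁₎)) · h₍₂₎ ⊗ k₍₂₎
    (cbar : K ⊗[𝕜] H →ₗ[𝕜] H ⊗[𝕜] K)
    (hcbar : ∀ (k : K) (h : H),
      cbar (k ⊗ₜ[𝕜] h)
        = (TensorProduct.lid 𝕜 (H ⊗[𝕜] K))
            (TensorProduct.map
              (r ∘ₗ TensorProduct.map (LinearMap.id : H →ₗ[𝕜] H)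
                  (HopfAlgebra.antipode (R := 𝕜) (A := K))
                ∘ₗ (TensorProduct.comm 𝕜 K H).toLinearMap)
              (TensorProduct.comm 𝕜 K H).toLinearMap
              (TensorProduct.tensorTensorTensorComm 𝕜 K K H H
                ((Coalgebra.comul (R := 𝕜) k) ⊗ₜ[𝕜] (Coalgebra.comul (R := 𝕜) h))))) :
    cbar ∘ₗ c = LinearMap.id ∧ c ∘ₗ cbar = LinearMap.id := by
  set ρ : K →ₗ[𝕜] H →ₗ[𝕜] 𝕜 := (TensorProduct.curry r).flip
  have hmul : ∀ k k', toConv (ρ (k * k')) = toConv (ρ k) * toConv (ρ k') :=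
    fun k k' ↦ WithConv.ext (LinearMap.ext fun h ↦ hR2 h k k')
  have hone : toConv (ρ 1) = 1 :=
    WithConv.ext (LinearMap.ext fun h ↦ by simpa [ρ] using hR3l h)
  set φ := toConv (lift (ρ ∘ₗ .id))
  set ψ := toConv (lift (ρ ∘ₗ HopfAlgebra.antipode 𝕜))
  have hc' : c = rightHit φ ∘ₗ (TensorProduct.comm 𝕜 H K).toLinearMap := by
    refine TensorProduct.ext' fun h k ↦ ?_
    simp [hc, rightHit, comul_tmul, φ, ρ, ← (ℛ 𝕜 h).eq, ← (ℛ 𝕜 k).eq, sum_tmul, tmul_sum]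
    exact Finset.sum_comm
  have hcbar' : cbar = (TensorProduct.comm 𝕜 K H).toLinearMap ∘ₗ rightHit ψ := by
    refine TensorProduct.ext' fun k h ↦ ?_
    simp [hcbar, rightHit, comul_tmul, ψ, ρ, ← (ℛ 𝕜 h).eq, ← (ℛ 𝕜 k).eq, sum_tmul, tmul_sum]
  have hψφ : rightHit ψ ∘ₗ rightHit φ = .id := rightHit_comp_rightHit_of_mul_eq_one
    (lift_comp_convMul_lift_comp_eq_one hmul hone LinearMap.id_mul_antipode)
  have hφψ : rightHit φ ∘ₗ rightHit ψ = .id := rightHit_comp_rightHit_of_mul_eq_one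
    (lift_comp_convMul_lift_comp_eq_one hmul hone LinearMap.antipode_mul_id)
  constructor
  · rw [hc', hcbar', LinearMap.comp_assoc, ← LinearMap.comp_assoc _ (rightHit φ) (rightHit ψ),
      hψφ, LinearMap.id_comp, comm_comp_comm]
  · rw [hc', hcbar', LinearMap.comp_assoc, comm_comp_comm_assoc, hφψ]

/-- Let `H, K` be Hopf algebras over a field `𝕜`, `S` the antipode of `K`, and
`r : H ⊗ K → 𝕜` a linear map satisfying the relative r-form axioms (R1), (R2), (R3).
Let `c : H ⊗ K → K ⊗ H` be the linear map `c(h ⊗ k) = Σ r(h₍₁₎, k₍₁₎) · k₍₂₎ ⊗ h₍₂₎`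
and `c̄ : K ⊗ H → H ⊗ K` the linear map `c̄(k ⊗ h) = Σ r(h₍₁₎, S(k₍₁₎)) · h₍₂₎ ⊗ k₍₂₎`.
Then `c̄ ∘ c = id` and `c ∘ c̄ = id`; in particular `c` is a linear isomorphism with
inverse `c̄`. -/
theorem relative_rform_half_braiding_invertible
    {𝕜 : Type*} [Field 𝕜] {H K : Type*} [Ring H] [Ring K]
    [HopfAlgebra 𝕜 H] [HopfAlgebra 𝕜 K]
    (r : H ⊗[𝕜] K →ₗ[𝕜] 𝕜)
    -- (R1): r(hh', k) = Σ r(h', k₍₁₎)·r(h, k₍₂₎)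
    (hR1 : ∀ (h h' : H) (k : K),
      r ((h * h') ⊗ₜ[𝕜] k)
        = LinearMap.mul' 𝕜 𝕜 (TensorProduct.map
            (r ∘ₗ TensorProduct.mk 𝕜 H K h') (r ∘ₗ TensorProduct.mk 𝕜 H K h)
            (Coalgebra.comul (R := 𝕜) k)))
    -- (R2): r(h, kk') = Σ r(h₍₁₎, k)·r(h₍₂₎, k')
    (hR2 : ∀ (h : H) (k k' : K),
      r (h ⊗ₜ[𝕜] (k * k'))
        = LinearMap.mul' 𝕜 𝕜 (TensorProduct.map
            (r ∘ₗ (TensorProduct.mk 𝕜 H K).flip k) (r ∘ₗ (TensorProduct.mk 𝕜 H K).flip k')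
            (Coalgebra.comul (R := 𝕜) h)))
    -- (R3): r(h,1) = ε(h), r(1,k) = ε(k)
    (hR3l : ∀ h : H, r (h ⊗ₜ[𝕜] (1 : K)) = Coalgebra.counit (R := 𝕜) h)
    (hR3r : ∀ k : K, r ((1 : H) ⊗ₜ[𝕜] k) = Coalgebra.counit (R := 𝕜) k)
    -- the half-braiding c(h ⊗ k) = Σ r(h₍₁₎, k₍₁₎) · k₍₂₎ ⊗ h₍₂₎
    (c : H ⊗[𝕜] K →ₗ[𝕜] K ⊗[𝕜] H)
    (hc : ∀ (h : H) (k : K),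
      c (h ⊗ₜ[𝕜] k)
        = (TensorProduct.lid 𝕜 (K ⊗[𝕜] H))
            (TensorProduct.map r (TensorProduct.comm 𝕜 H K).toLinearMap
              (TensorProduct.tensorTensorTensorComm 𝕜 H H K K
                ((Coalgebra.comul (R := 𝕜) h) ⊗ₜ[𝕜] (Coalgebra.comul (R := 𝕜) k)))))
    -- the claimed inverse c̄(k ⊗ h) = Σ r(h₍₁₎, S(k₍₁₎)) · h₍₂₎ ⊗ k₍₂₎
    (cbar : K ⊗[𝕜] H →ₗ[𝕜] H ⊗[𝕜] K)
    (hcbar : ∀ (k : K) (h : H),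
      cbar (k ⊗ₜ[𝕜] h)
        = (TensorProduct.lid 𝕜 (H ⊗[𝕜] K))
            (TensorProduct.map
              (r ∘ₗ TensorProduct.map (LinearMap.id : H →ₗ[𝕜] H)
                  (HopfAlgebra.antipode (R := 𝕜) (A := K))
                ∘ₗ (TensorProduct.comm 𝕜 K H).toLinearMap)
              (TensorProduct.comm 𝕜 K H).toLinearMap
              (TensorProduct.tensorTensorTensorComm 𝕜 K K H H
                ((Coalgebra.comul (R := 𝕜) k) ⊗ₜ[𝕜] (Coalgebra.comul (R := 𝕜) h))))) :
    cbar ∘ₗ c = LinearMap.id ∧ c ∘ₗ cbar = LinearMap.id :=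
  relative_rform_half_braiding_invertible_general r hR2 hR3l c hc cbar hcbar
end

section
/- Let ℓ ≥ 1 and let N be an odd natural number dividing ℓ. In the group G₃,ℓ = (ZMod 3) ⋊ (ZMod 2ℓ) (with j ∈ ZMod 2ℓ acting on ZMod 3 by multiplication by (−1)^j), the intersection of the center Z(G₃,ℓ) = ⟨(0,2)⟩ with the subgroup generated by (1,0) and (0,N) equals the cyclic subgroup generated by (0, 2N), and this subgroup has order ℓ/N. -/
open SemidirectProduct Multiplicative

/-- The sign character `ZMod 2 → (ZMod 3)ˣ`, sending the class of `j` to `(-1)^j`. -/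
def g3SignHom : Multiplicative (ZMod 2) →* (ZMod 3)ˣ where
  toFun x := if x.toAdd = 0 then 1 else -1
  map_one' := by decide
  map_mul' := by decide

/-- Additive automorphisms of an additive group, viewed as multiplicative automorphisms
of the corresponding multiplicative group. -/
def addAutToMulAut (A : Type*) [AddCommGroup A] :
    Multiplicative (AddAut A) →* MulAut (Multiplicative A) where
  toFun f := AddEquiv.toMultiplicative f.toAdd
  map_one' := rfl
  map_mul' _ _ := rfl

/-- The action of `ZMod (2ℓ)` on `ZMod 3` where `j` acts by multiplication by `(-1)^j`. -/
def g3Action (ℓ : ℕ) :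
    Multiplicative (ZMod (2 * ℓ)) →* MulAut (Multiplicative (ZMod 3)) :=
  (addAutToMulAut (ZMod 3)).comp <| (AddAut.mulLeft (R := ZMod 3)).comp <|
    g3SignHom.comp <| AddMonoidHom.toMultiplicative
      (ZMod.castHom (dvd_mul_right 2 ℓ) (ZMod 2)).toAddMonoidHom

/-- The group `G₃,ℓ = ⟨s, t ∣ s³ = t^{2ℓ} = 1, ts = s²t⟩`, realized as the semidirect
product `(ZMod 3) ⋊ (ZMod 2ℓ)` in which `j` acts on `ZMod 3` by multiplication by
`(-1)^j`; here `s = (1,0) = inl 1` and `t = (0,1) = inr 1`. -/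
abbrev G3 (ℓ : ℕ) : Type :=
  Multiplicative (ZMod 3) ⋊[g3Action ℓ] Multiplicative (ZMod (2 * ℓ))

/-!
An element `(a, j)` of `G₃,ℓ` is central iff `a = 0` and `j` is even: commuting with `t` forces
`a = -a`, and commuting with `s` forces `(-1)^j = 1`. Every element of `⟨s, t^N⟩` has second
coordinate `k • N`, and as `N` is odd, `k • N` is even only when `k` is, which puts the central
ones in `⟨(0, 2N)⟩`. The order of `(0, 2N)` is `2ℓ / gcd(2ℓ, 2N) = ℓ / N`.
-/

theorem SemidirectProduct.right_mem_zpowers_of_mem_closure {N G : Type*} [Group N] [Group G]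
    {φ : G →* MulAut N} {n : N} {h : G} {g : N ⋊[φ] G}
    (hg : g ∈ Subgroup.closure {inl n, inr h}) : g.right ∈ Subgroup.zpowers h := by
  have hle : Subgroup.closure {inl n, inr h} ≤
      (Subgroup.zpowers h).comap (rightHom (φ := φ)) := by
    rw [Subgroup.closure_le]
    rintro _ (rfl | rfl) <;> simp [Subgroup.mem_zpowers]
  exact hle hg

theorem zsmul_mem_zmultiples_two_nsmul {A F : Type*} [AddCommGroup A] [FunLike F A (ZMod 2)]
    [AddMonoidHomClass F A (ZMod 2)] (f : F) {a : A} (ha : f a = 1) {k : ℤ}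
    (hk : f (k • a) = 0) :
    k • a ∈ AddSubgroup.zmultiples (2 • a) := by
  rw [map_zsmul, ha, zsmul_one, ZMod.intCast_eq_zero_iff_even] at hk
  obtain ⟨m, rfl⟩ := hk
  exact ⟨m, by rw [← two_mul, mul_comm, mul_zsmul, two_zsmul, two_nsmul]⟩

section

variable {ℓ : ℕ}

theorem g3Action_apply_of_castHom_eq_zero {j : Multiplicative (ZMod (2 * ℓ))}
    (hj : ZMod.castHom (dvd_mul_right 2 ℓ) (ZMod 2) j.toAdd = 0) (x : Multiplicative (ZMod 3)) :
    g3Action ℓ j x = x := by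
  simp [g3Action, addAutToMulAut, g3SignHom, hj]

theorem g3Action_apply_of_castHom_ne_zero {j : Multiplicative (ZMod (2 * ℓ))}
    (hj : ZMod.castHom (dvd_mul_right 2 ℓ) (ZMod 2) j.toAdd ≠ 0) (x : Multiplicative (ZMod 3)) :
    g3Action ℓ j x = x⁻¹ := by
  rw [ZMod.castHom_apply] at hj
  simp only [g3Action, addAutToMulAut, g3SignHom, MonoidHom.comp_apply, MonoidHom.coe_mk,
    OneHom.coe_mk, AddMonoidHom.toMultiplicative_apply_apply, RingHom.toAddMonoidHom_eq_coe,
    AddMonoidHom.coe_coe, ZMod.castHom_apply, toAdd_ofAdd, if_neg hj]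
  change ofAdd ((-1 : ZMod 3) * toAdd x) = x⁻¹
  rw [neg_one_mul, ofAdd_neg, ofAdd_toAdd]

theorem G3.mem_center_iff {g : G3 ℓ} :
    g ∈ Subgroup.center (G3 ℓ) ↔
      g.left = 1 ∧ ZMod.castHom (dvd_mul_right 2 ℓ) (ZMod 2) g.right.toAdd = 0 := by
  rw [Subgroup.mem_center_iff]
  constructor
  · intro hg
    have hleft : g.left = 1 := by
      have h := congrArg left (hg (inr (ofAdd 1)))
      simp only [mul_left, left_inr, right_inr, map_one, one_mul, mul_one] at h
      rw [g3Action_apply_of_castHom_ne_zero (by simp)] at h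
      exact (by decide : ∀ x : Multiplicative (ZMod 3), x⁻¹ = x → x = 1) _ h
    refine ⟨hleft, ?_⟩
    by_contra hodd
    have h := congrArg left (hg (inl (ofAdd 1)))
    simp only [mul_left, left_inl, right_inl, map_one, hleft, one_mul, mul_one,
      g3Action_apply_of_castHom_ne_zero hodd] at h
    exact absurd h (by decide)
  · rintro ⟨hleft, hright⟩ h
    ext
    · simp [hleft, g3Action_apply_of_castHom_eq_zero hright]
    · exact mul_comm h.right g.right

end

theorem center_inter_support_G3_general (ℓ N : ℕ) (hN : Odd N) (hdvd : N ∣ ℓ) :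
    Subgroup.center (G3 ℓ) ⊓
        Subgroup.closure {(inl (ofAdd (1 : ZMod 3)) : G3 ℓ),
          inr (ofAdd ((N : ZMod (2 * ℓ))))}
      = Subgroup.zpowers (inr (ofAdd (((2 * N : ℕ) : ZMod (2 * ℓ)))) : G3 ℓ) ∧
    Nat.card
        (Subgroup.zpowers (inr (ofAdd (((2 * N : ℕ) : ZMod (2 * ℓ)))) : G3 ℓ))
      = ℓ / N := by
  have hN_odd : ZMod.castHom (dvd_mul_right 2 ℓ) (ZMod 2) (N : ZMod (2 * ℓ)) = 1 := by
    rw [map_natCast, ZMod.natCast_eq_one_iff_odd]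
    exact hN
  have h2N : ((2 * N : ℕ) : ZMod (2 * ℓ)) = 2 • (N : ZMod (2 * ℓ)) := by
    rw [two_nsmul]; push_cast; ring
  refine ⟨le_antisymm ?_ ?_, ?_⟩
  · rintro g ⟨hcenter, hclosure⟩
    obtain ⟨hleft, hright⟩ := G3.mem_center_iff.mp hcenter
    obtain ⟨k, hk⟩ := Subgroup.mem_zpowers_iff.mp (right_mem_zpowers_of_mem_closure hclosure)
    rw [← hk, toAdd_zpow, toAdd_ofAdd] at hright
    obtain ⟨m, hm : m • 2 • (N : ZMod (2 * ℓ)) = k • (N : ZMod (2 * ℓ))⟩ :=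
      zsmul_mem_zmultiples_two_nsmul _ hN_odd hright
    refine ⟨m, ?_⟩
    calc inr (ofAdd ((2 * N : ℕ) : ZMod (2 * ℓ))) ^ m
        = inr (ofAdd (m • 2 • (N : ZMod (2 * ℓ)))) := by rw [← map_zpow, ofAdd_zsmul, h2N]
      _ = inr g.right := by rw [hm, ofAdd_zsmul, hk]
      _ = g := SemidirectProduct.ext hleft.symm rfl
  · rw [Subgroup.zpowers_le]
    refine ⟨G3.mem_center_iff.mpr ⟨rfl, ?_⟩, ?_⟩
    · rw [right_inr, toAdd_ofAdd, map_natCast, ZMod.natCast_eq_zero_iff_even]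
      exact even_two_mul N
    · rw [h2N, ofAdd_nsmul, map_pow]
      exact pow_mem (Subgroup.subset_closure (Set.mem_insert_of_mem _ (Set.mem_singleton _))) 2
  · rw [Nat.card_zpowers, orderOf_injective (inr : _ →* G3 ℓ) inr_injective,
      orderOf_ofAdd_eq_addOrderOf, ZMod.addOrderOf_coe' _ (by positivity [hN.pos]),
      Nat.gcd_mul_left, Nat.gcd_eq_right hdvd, Nat.mul_div_mul_left _ _ two_pos]

/-- For `N` odd dividing `ℓ`, the intersection of the center of `G₃,ℓ` with the subgroup
generated by `s = (1,0)` and `t^N = (0,N)` equals the cyclic subgroup generated by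
`(0, 2N)`, which has order `ℓ/N`. -/
theorem center_inter_support_G3 (ℓ N : ℕ) (hℓ : 1 ≤ ℓ) (hN : Odd N) (hdvd : N ∣ ℓ) :
    Subgroup.center (G3 ℓ) ⊓
        Subgroup.closure {(inl (ofAdd (1 : ZMod 3)) : G3 ℓ),
          inr (ofAdd ((N : ZMod (2 * ℓ))))}
      = Subgroup.zpowers (inr (ofAdd (((2 * N : ℕ) : ZMod (2 * ℓ)))) : G3 ℓ) ∧
    Nat.card
        (Subgroup.zpowers (inr (ofAdd (((2 * N : ℕ) : ZMod (2 * ℓ)))) : G3 ℓ))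
      = ℓ / N :=
  center_inter_support_G3_general ℓ N hN hdvd
end
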